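/- In the Teleported CHSH game, if the resources are classical shared randomness together with arbitrary Alice–Charlie and Bob–Charlie non-signaling resources in which Charlie receives no input (Charlie's marginal output distribution is fixed), then the maximum winning probability is 3/4. Formally: if Charlie's outputs (Z₁,Z₂) have a fixed distribution independent of everything else communicated to him, and Alice's output X is a (randomized) function of A and shared randomness, Bob's output Y of B and shared randomness, then Pr[X ⊕ Y ⊕ A·Z₁ ⊕ (1−A)·Z₂ = A·B] ≤ 3/4 for independent uniform bits A, B. -/

import Mathlib

/-!
Charlie's bits depend on the shared seed only, so for a fixed seed Alice can absorb the bit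
Charlie contributes on her question `a` (namely `z₁` if `a` and `z₂` otherwise) into her own
answer. Every deterministic strategy of the teleported game is thus a deterministic CHSH
strategy, which loses on at least one of the four question pairs; averaging over the seed
gives 3/4.
-/

open Finset

/-- Xor-ing the four winning conditions gives `0 = 1`. -/
theorem chsh_exists_loss (x y : Bool → Bool) : ∃ a b, xor (x a) (y b) ≠ (a && b) := by
  by_contra! hwin
  have hparity := congrArg₂ xor (congrArg₂ xor (hwin false false) (hwin false true))
    (congrArg₂ xor (hwin true false) (hwin true true))
  revert hparity
  cases x false <;> cases x true <;> cases y false <;> cases y true <;> decide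

theorem chsh_win_count_le_three (x y : Bool → Bool) :
    ∑ a : Bool, ∑ b : Bool, (if xor (x a) (y b) = (a && b) then 1 else 0 : ℝ) ≤ 3 := by
  obtain ⟨a₀, b₀, hloss⟩ := chsh_exists_loss x y
  rw [← Fintype.sum_prod_type', sum_boole]
  have hlt : #{ab : Bool × Bool | xor (x ab.1) (y ab.2) = (ab.1 && ab.2)} < #univ :=
    card_lt_card (filter_ssubset.mpr ⟨(a₀, b₀), mem_univ _, hloss⟩)
  rw [card_univ, Fintype.card_prod, Fintype.card_bool] at hlt
  exact_mod_cast Nat.le_of_lt_succ hlt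

theorem teleported_referee_eq_chsh_referee (a x y z₁ z₂ : Bool) :
    xor x (xor y (xor (a && z₁) (!a && z₂))) = xor (xor x (cond a z₁ z₂)) y := by
  decide +revert

theorem teleported_win_count_le_three (x y : Bool → Bool) (z : Bool × Bool) :
    ∑ a : Bool, ∑ b : Bool,
      (if xor (x a) (xor (y b) (xor (a && z.1) (!a && z.2))) = (a && b) then 1 else 0 : ℝ)
      ≤ 3 := by
  simpa only [teleported_referee_eq_chsh_referee] using
    chsh_win_count_le_three (fun a => xor (x a) (cond a z.1 z.2)) y

theorem teleported_chsh_nonsignaling_bound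
    {Ω : Type*} [Fintype Ω] (p : Ω → ℝ)
    (hp : ∀ ω, 0 ≤ p ω) (hsum : ∑ ω, p ω = 1)
    (f g : Ω → Bool → Bool) (h : Ω → Bool × Bool) :
    ∑ ω, p ω * ((1 / 4 : ℝ) * ∑ a : Bool, ∑ b : Bool,
      (if xor (f ω a) (xor (g ω b)
          (xor (a && (h ω).1) (!a && (h ω).2))) = (a && b)
       then 1 else 0)) ≤ 3 / 4 := by
  calc _ ≤ ∑ ω, p ω * (3 / 4) := sum_le_sum fun ω _ => mul_le_mul_of_nonneg_left
        (by linarith [teleported_win_count_le_three (f ω) (g ω) (h ω)]) (hp ω)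
    _ = 3 / 4 := by rw [← sum_mul, hsum, one_mul]
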